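/- Let T be a finite tree and let M be a minimal dominating set of T with |M| = Γ(T). Then |a_1(M)| = |N_1(M)|. -/

import Mathlib

open scoped Classical

variable {V : Type*} [Fintype V] [DecidableEq V]

/-- `S` is a dominating set of `G`: every vertex is in `S` or adjacent to a vertex of `S`. -/
def IsDomSet (G : SimpleGraph V) (S : Finset V) : Prop :=
  ∀ v : V, v ∈ S ∨ ∃ u ∈ S, G.Adj u v

/-- `S` is a minimal dominating set: it is dominating and no proper subset is dominating. -/
def MinimalDomSet (G : SimpleGraph V) (S : Finset V) : Prop :=
  IsDomSet G S ∧ ∀ T : Finset V, T ⊂ S → ¬ IsDomSet G T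

/-- `d_i(G)`: the number of dominating sets of `G` of cardinality `i`. -/
noncomputable def domCount (G : SimpleGraph V) (i : ℕ) : ℕ :=
  (Finset.univ.filter fun S : Finset V => IsDomSet G S ∧ S.card = i).card

/-- `a(S)`: the set of critical vertices of a dominating set `S`. -/
noncomputable def aSet (G : SimpleGraph V) (S : Finset V) : Finset V :=
  S.filter fun v => ¬ IsDomSet G (S.erase v)

/-- `a(G,i)`: the sum of `|a(S)|` over all dominating sets `S` of cardinality `i`. -/
noncomputable def aTotal (G : SimpleGraph V) (i : ℕ) : ℕ :=
  ∑ S ∈ Finset.univ.filter (fun S : Finset V => IsDomSet G S ∧ S.card = i), (aSet G S).card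

/-- `γ(G)`: the minimum cardinality of a dominating set. -/
noncomputable def gamma (G : SimpleGraph V) : ℕ :=
  sInf {k | ∃ S : Finset V, IsDomSet G S ∧ S.card = k}

/-- `Γ(G)`: the maximum cardinality of a minimal dominating set. -/
noncomputable def bigGamma (G : SimpleGraph V) : ℕ :=
  sSup {k | ∃ S : Finset V, MinimalDomSet G S ∧ S.card = k}

/-- The closed neighbourhood `N[v]` as a finset. -/
noncomputable def closedNbhd (G : SimpleGraph V) (v : V) : Finset V :=
  Finset.univ.filter fun u => u = v ∨ G.Adj v u

/-- `N_1(S)`: vertices outside `S` with exactly one closed neighbour in `S`. -/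
noncomputable def N1Set (G : SimpleGraph V) (S : Finset V) : Finset V :=
  Finset.univ.filter fun v => v ∉ S ∧ (closedNbhd G v ∩ S).card = 1

/-- `N_2(S)`: vertices outside `S` with at least two closed neighbours in `S`. -/
noncomputable def N2Set (G : SimpleGraph V) (S : Finset V) : Finset V :=
  Finset.univ.filter fun v => v ∉ S ∧ 2 ≤ (closedNbhd G v ∩ S).card

/-- `a_1(S)`: critical vertices whose closed neighbourhood meets `N_1(S)`. -/
noncomputable def a1Set (G : SimpleGraph V) (S : Finset V) : Finset V :=
  (aSet G S).filter fun v => (closedNbhd G v ∩ N1Set G S).Nonempty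

/-- `a_2(S)`: critical vertices whose closed neighbourhood misses `N_1(S)`. -/
noncomputable def a2Set (G : SimpleGraph V) (S : Finset V) : Finset V :=
  (aSet G S).filter fun v => closedNbhd G v ∩ N1Set G S = ∅

/-- In the tree `G` rooted at `r`, `x` is a descendant of `y`:
`y` lies on the unique path from `x` to the root `r`. -/
def Descendant (G : SimpleGraph V) (r x y : V) : Prop :=
  G.dist x r = G.dist x y + G.dist y r

/-- `x` is a child of `y` in `G` rooted at `r`. -/
def IsChild (G : SimpleGraph V) (r x y : V) : Prop :=
  Descendant G r x y ∧ G.dist y x = 1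

/-- `p` is the parent of `x` in `G` rooted at `r`. -/
def IsParent (G : SimpleGraph V) (r p x : V) : Prop :=
  IsChild G r x p

/-- `x` is a grandchild of `y` in `G` rooted at `r`. -/
def IsGrandchild (G : SimpleGraph V) (r x y : V) : Prop :=
  Descendant G r x y ∧ G.dist y x = 2

/-!
Each `u ∈ N_1(M)` has a unique neighbour in `M`, and sending `u` to it maps `N_1(M)` onto
`a_1(M)`; the map is injective unless some vertex of `M` has two external private neighbours.
That cannot happen for a Γ-set of a tree. If `v ∈ M` had two, root the tree at `v`, remove `v`
and add its external private neighbours. A vertex `m ∈ M` whose private neighbours are now all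
dominated by added vertices lies three levels below a removed vertex; removing its children in
`M` makes `m` its own private neighbour, and those children are exchanged in turn, layer after
layer. Each removed vertex is replaced by at least one of its private neighbours, and `v` by
two, so the result is a minimal dominating set larger than `M`.
-/

open Finset SimpleGraph

variable {G : SimpleGraph V} {M S : Finset V} {m p q r u u₁ u₂ v w x : V} {n : ℕ}

lemma mem_closedNbhd : x ∈ closedNbhd G v ↔ x = v ∨ G.Adj v x := by
  simp [closedNbhd]

lemma self_mem_closedNbhd (v : V) : v ∈ closedNbhd G v :=
  mem_closedNbhd.2 (Or.inl rfl)

lemma mem_closedNbhd_of_adj (h : G.Adj v x) : x ∈ closedNbhd G v :=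
  mem_closedNbhd.2 (Or.inr h)

lemma adj_of_mem_closedNbhd (h : x ∈ closedNbhd G v) (hne : x ≠ v) : G.Adj v x :=
  (mem_closedNbhd.1 h).resolve_left hne

lemma mem_closedNbhd_comm : x ∈ closedNbhd G v ↔ v ∈ closedNbhd G x := by
  simp only [mem_closedNbhd, eq_comm, G.adj_comm]

lemma mem_of_closedNbhd_inter_eq_singleton (h : closedNbhd G p ∩ S = {r}) :
    r ∈ closedNbhd G p ∧ r ∈ S :=
  mem_inter.1 (h ▸ mem_singleton_self r)

lemma eq_of_closedNbhd_inter_eq_singleton (h : closedNbhd G p ∩ S = {r})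
    (hx : x ∈ closedNbhd G p) (hxS : x ∈ S) : x = r :=
  mem_singleton.1 (h ▸ mem_inter.2 ⟨hx, hxS⟩)

lemma closedNbhd_inter_eq_singleton_self (hx : x ∈ S) (h : ∀ y ∈ S, ¬G.Adj x y) :
    closedNbhd G x ∩ S = {x} :=
  eq_singleton_iff_unique_mem.2 ⟨mem_inter.2 ⟨self_mem_closedNbhd x, hx⟩,
    fun y hy => (mem_closedNbhd.1 (mem_inter.1 hy).1).resolve_right (h y (mem_inter.1 hy).2)⟩

lemma IsDomSet.exists_mem_closedNbhd (hS : IsDomSet G S) (w : V) :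
    ∃ x ∈ S, x ∈ closedNbhd G w := by
  rcases hS w with hw | ⟨x, hx, hxw⟩
  · exact ⟨w, hw, self_mem_closedNbhd w⟩
  · exact ⟨x, hx, mem_closedNbhd_of_adj hxw.symm⟩

omit [Fintype V] [DecidableEq V] in
lemma IsDomSet.mono {T : Finset V} (hT : IsDomSet G T) (hTS : T ⊆ S) : IsDomSet G S :=
  fun w => (hT w).imp (@hTS w) fun ⟨u, hu, huw⟩ => ⟨u, hTS hu, huw⟩

lemma mem_aSet_of_private (h : closedNbhd G p ∩ M = {r}) : r ∈ aSet G M := by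
  refine mem_filter.2 ⟨(mem_of_closedNbhd_inter_eq_singleton h).2, fun hdom => ?_⟩
  obtain ⟨x, hx, hxp⟩ := hdom.exists_mem_closedNbhd p
  exact (mem_erase.1 hx).1 (eq_of_closedNbhd_inter_eq_singleton h hxp (mem_of_mem_erase hx))

lemma IsDomSet.exists_private (hM : IsDomSet G M) (hr : r ∈ aSet G M) :
    ∃ p, closedNbhd G p ∩ M = {r} := by
  obtain ⟨hrM, hnd⟩ := mem_filter.1 hr
  simp only [IsDomSet, not_forall, not_or, not_exists, not_and] at hnd
  obtain ⟨p, hp, hnadj⟩ := hnd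
  have only_r : ∀ x ∈ M, x ∈ closedNbhd G p → x = r := by
    intro x hx hxp
    by_contra hne
    rcases mem_closedNbhd.1 hxp with rfl | hadj
    · exact hp (mem_erase.2 ⟨hne, hx⟩)
    · exact hnadj x (mem_erase.2 ⟨hne, hx⟩) hadj.symm
  obtain ⟨x, hxM, hxp⟩ := hM.exists_mem_closedNbhd p
  obtain rfl := only_r x hxM hxp
  exact ⟨p, eq_singleton_iff_unique_mem.2
    ⟨mem_inter.2 ⟨hxp, hxM⟩, fun y hy => only_r y (mem_inter.1 hy).2 (mem_inter.1 hy).1⟩⟩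

lemma MinimalDomSet.exists_private (hM : MinimalDomSet G M) (hr : r ∈ M) :
    ∃ p, closedNbhd G p ∩ M = {r} :=
  hM.1.exists_private (mem_filter.2 ⟨hr, hM.2 _ (erase_ssubset hr)⟩)

lemma minimalDomSet_of_forall_private (hS : IsDomSet G S)
    (h : ∀ x ∈ S, ∃ p, closedNbhd G p ∩ S = {x}) : MinimalDomSet G S := by
  refine ⟨hS, fun T hTS hT => ?_⟩
  obtain ⟨x, hxS, hxT⟩ := exists_of_ssubset hTS
  obtain ⟨p, hp⟩ := h x hxS
  refine (mem_filter.1 (mem_aSet_of_private hp)).2 (hT.mono fun y hy => ?_)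
  exact mem_erase.2 ⟨ne_of_mem_of_not_mem hy hxT, hTS.subset hy⟩

omit [DecidableEq V] in
lemma MinimalDomSet.card_le_bigGamma (hS : MinimalDomSet G S) : S.card ≤ bigGamma G :=
  le_csSup ⟨Fintype.card V, fun _ ⟨T, _, hT⟩ => hT ▸ card_le_univ T⟩ ⟨S, hS, rfl⟩

lemma mem_N1Set : x ∈ N1Set G M ↔ x ∉ M ∧ (closedNbhd G x ∩ M).card = 1 := by
  simp [N1Set]

lemma closedNbhd_inter_eq_singleton_of_mem_N1Set (hx : x ∈ N1Set G M)
    (hr : r ∈ closedNbhd G x) (hrM : r ∈ M) : closedNbhd G x ∩ M = {r} := by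
  obtain ⟨a, ha⟩ := card_eq_one.1 (mem_N1Set.1 hx).2
  rw [ha, eq_of_closedNbhd_inter_eq_singleton ha hr hrM]

lemma mem_N1Set_of_private (h : closedNbhd G x ∩ M = {r}) (hne : x ≠ r) : x ∈ N1Set G M :=
  mem_N1Set.2 ⟨fun hx => hne (eq_of_closedNbhd_inter_eq_singleton h (self_mem_closedNbhd x) hx),
    by rw [h, card_singleton]⟩

theorem card_a1Set_eq_card_N1Set
    (h : ∀ r ∈ M, ∀ u ∈ closedNbhd G r ∩ N1Set G M, ∀ u' ∈ closedNbhd G r ∩ N1Set G M,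
      u = u') :
    (a1Set G M).card = (N1Set G M).card := by
  have mem_of_mem_a1Set : ∀ {r}, r ∈ a1Set G M → r ∈ M := fun hr =>
    (mem_filter.1 (mem_filter.1 hr).1).1
  refine le_antisymm (card_le_card_of_forall_subsingleton (fun r u => u ∈ closedNbhd G r) ?_ ?_)
    (card_le_card_of_forall_subsingleton (fun u r => r ∈ closedNbhd G u) ?_ ?_)
  · intro r hr
    obtain ⟨u, hu⟩ := (mem_filter.1 hr).2
    exact ⟨u, (mem_inter.1 hu).2, (mem_inter.1 hu).1⟩
  · intro u hu r ⟨hr, hur⟩ r' ⟨hr', hur'⟩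
    obtain ⟨a, ha⟩ := card_eq_one.1 (mem_N1Set.1 hu).2
    rw [eq_of_closedNbhd_inter_eq_singleton ha (mem_closedNbhd_comm.1 hur) (mem_of_mem_a1Set hr),
      eq_of_closedNbhd_inter_eq_singleton ha (mem_closedNbhd_comm.1 hur') (mem_of_mem_a1Set hr')]
  · intro u hu
    obtain ⟨r, hr⟩ := card_eq_one.1 (mem_N1Set.1 hu).2
    have hru := (mem_of_closedNbhd_inter_eq_singleton hr).1
    exact ⟨r, mem_filter.2 ⟨mem_aSet_of_private hr, u, mem_inter.2
      ⟨mem_closedNbhd_comm.1 hru, hu⟩⟩, hru⟩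
  · intro r hr u ⟨hu, hru⟩ u' ⟨hu', hru'⟩
    exact h r (mem_of_mem_a1Set hr) u (mem_inter.2 ⟨mem_closedNbhd_comm.1 hru, hu⟩)
      u' (mem_inter.2 ⟨mem_closedNbhd_comm.1 hru', hu'⟩)

omit [Fintype V] [DecidableEq V] in
lemma dist_le_length_of_mem_support (p : G.Walk v w) (hx : x ∈ p.support) :
    G.dist v x ≤ p.length :=
  (dist_le (p.takeUntil x hx)).trans (p.length_takeUntil_le_length hx)

omit [Fintype V] [DecidableEq V] in
lemma SimpleGraph.IsTree.eq_of_adj_of_dist_add_one_eq (hT : G.IsTree) {b b' : V}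
    (hb : G.Adj x b) (hb' : G.Adj x b') (h : G.dist v b + 1 = G.dist v x)
    (h' : G.dist v b' + 1 = G.dist v x) : b = b' := by
  classical
  obtain ⟨q, hq, hql⟩ := hT.connected.exists_path_of_dist v x
  have eq_penultimate :
      ∀ {c}, G.Adj x c → G.dist v c + 1 = G.dist v x → c = q.penultimate := by
    intro c hc hcd
    obtain ⟨p, hp, hpl⟩ := hT.connected.exists_path_of_dist v c
    have hx : x ∉ p.support := fun hx => by
      have := dist_le_length_of_mem_support p hx
      omega
    exact hT.isAcyclic.eq_penultimate_of_adj_end hq hc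
      (hT.isAcyclic.mem_support_of_ne_mem_support_of_adj_of_isPath hq hp hc hx)
  exact (eq_penultimate hb h).trans (eq_penultimate hb' h').symm

omit [DecidableEq V] in
lemma SimpleGraph.Connected.dist_lt_card (hG : G.Connected) (v w : V) :
    G.dist v w < Fintype.card V := by
  obtain ⟨p, hp, hpl⟩ := hG.exists_path_of_dist v w
  exact hpl ▸ hp.length_lt

noncomputable def externalPrivates (G : SimpleGraph V) (M S : Finset V) : Finset V :=
  (N1Set G M).filter fun q => ∃ r ∈ S, q ∈ closedNbhd G r

/-- The vertices of `M \ S` that keep no private neighbour once `externalPrivates G M S` is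
added to `M`. -/
noncomputable def deprived (G : SimpleGraph V) (M S : Finset V) : Finset V :=
  (M \ S).filter fun m =>
    ∀ p, closedNbhd G p ∩ M = {m} → (closedNbhd G p ∩ externalPrivates G M S).Nonempty

namespace Exchange

/-- Layer `n` lies at depth `4n` below `v`; its external private neighbours lie at depth `4n+1`,
the private neighbours these take away from other vertices at `4n+2`, the deprived vertices at
`4n+3`, and their children in `M` form layer `n+1`. -/
noncomputable def layer (G : SimpleGraph V) (M : Finset V) (v : V) : ℕ → Finset V
  | 0 => {v}
  | n + 1 => M.filter fun c =>
      ∃ m ∈ deprived G M (layer G M v n), G.Adj m c ∧ G.dist v m + 1 = G.dist v c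

-- Layers `n ≥ card V` are empty, as layer `n` lies at depth `4n`.
noncomputable def removed (G : SimpleGraph V) (M : Finset V) (v : V) : Finset V :=
  (range (Fintype.card V)).biUnion (layer G M v)

noncomputable def added (G : SimpleGraph V) (M : Finset V) (v : V) : Finset V :=
  (range (Fintype.card V)).biUnion fun n => externalPrivates G M (layer G M v n)

noncomputable def result (G : SimpleGraph V) (M : Finset V) (v : V) : Finset V :=
  (M \ removed G M v) ∪ added G M v

def IsLayer (G : SimpleGraph V) (M : Finset V) (v : V) (n : ℕ) (S : Finset V) : Prop :=
  ∀ r ∈ S, r ∈ M ∧ G.dist v r = 4 * n ∧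
    (r = v ∨ ∃ m ∈ M, G.Adj m r ∧ G.dist v m + 1 = G.dist v r)

omit [Fintype V] [DecidableEq V] in
lemma IsLayer.dist_eq_add_one_of_adj (hT : G.IsTree) (hS : IsLayer G M v n S) (hr : r ∈ S)
    (hx : x ∉ M) (hrx : G.Adj r x) : G.dist v x = G.dist v r + 1 := by
  rcases hT.dist_eq_dist_add_one_of_adj v hrx with h | h
  · obtain ⟨-, -, rfl | ⟨m, hmM, hmr, hmd⟩⟩ := hS r hr
    · simp at h
    · exact absurd (hT.eq_of_adj_of_dist_add_one_eq hrx hmr.symm h.symm hmd ▸ hmM) hx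
  · exact h

lemma IsLayer.exists_of_mem_externalPrivates (hT : G.IsTree) (hS : IsLayer G M v n S)
    (hq : q ∈ externalPrivates G M S) :
    G.dist v q = 4 * n + 1 ∧ ∃ r ∈ S, G.Adj r q ∧ closedNbhd G q ∩ M = {r} := by
  obtain ⟨hqN, r, hrS, hqr⟩ := mem_filter.1 hq
  obtain ⟨hrM, hrd, -⟩ := hS r hrS
  have hqM := (mem_N1Set.1 hqN).1
  have hrq : G.Adj r q := adj_of_mem_closedNbhd hqr (ne_of_mem_of_not_mem hrM hqM).symm
  refine ⟨by rw [hS.dist_eq_add_one_of_adj hT hrS hqM hrq, hrd], r, hrS, hrq, ?_⟩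
  exact closedNbhd_inter_eq_singleton_of_mem_N1Set hqN (mem_closedNbhd_comm.1 hqr) hrM

lemma IsLayer.dist_of_private_dominated (hT : G.IsTree) (hS : IsLayer G M v n S) (hm : m ∈ M)
    (hmS : m ∉ S) (hp : closedNbhd G p ∩ M = {m})
    (hq : q ∈ closedNbhd G p ∩ externalPrivates G M S) :
    p ∉ M ∧ G.Adj m p ∧ G.dist v p = 4 * n + 2 ∧ G.dist v m = 4 * n + 3 := by
  obtain ⟨hqp, hqA⟩ := mem_inter.1 hq
  obtain ⟨hqd, r, hrS, hrq, hqr⟩ := hS.exists_of_mem_externalPrivates hT hqA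
  obtain ⟨hrM, hrd, -⟩ := hS r hrS
  have hqM : q ∉ M := (mem_N1Set.1 (mem_filter.1 hqA).1).1
  have hmr : m ≠ r := fun h => hmS (h ▸ hrS)
  have hpq : G.Adj p q := adj_of_mem_closedNbhd hqp (by
    rintro rfl
    exact hmr (singleton_injective (hp.symm.trans hqr)))
  have hpM : p ∉ M := fun hpM => hmr <|
    (eq_of_closedNbhd_inter_eq_singleton hp (self_mem_closedNbhd p) hpM).symm.trans
      (eq_of_closedNbhd_inter_eq_singleton hqr (mem_closedNbhd_of_adj hpq.symm) hpM)
  have hpm : G.Adj p m :=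
    adj_of_mem_closedNbhd (mem_of_closedNbhd_inter_eq_singleton hp).1 (ne_of_mem_of_not_mem hm hpM)
  have hpd : G.dist v p = 4 * n + 2 := by
    rcases hT.dist_eq_dist_add_one_of_adj v hpq with h | h
    · omega
    · have hpr := hT.eq_of_adj_of_dist_add_one_eq hpq.symm hrq.symm h.symm (by omega)
      exact absurd (hpr ▸ hrM) hpM
  have hmd : G.dist v m = 4 * n + 3 := by
    rcases hT.dist_eq_dist_add_one_of_adj v hpm with h | h
    · exact absurd (hT.eq_of_adj_of_dist_add_one_eq hpm hpq h.symm (by omega) ▸ hm) hqM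
    · omega
  exact ⟨hpM, hpm.symm, hpd, hmd⟩

lemma IsLayer.dist_of_mem_deprived (hT : G.IsTree) (hM : MinimalDomSet G M)
    (hS : IsLayer G M v n S) (hm : m ∈ deprived G M S) : G.dist v m = 4 * n + 3 := by
  obtain ⟨hmMS, hlost⟩ := mem_filter.1 hm
  obtain ⟨hmM, hmS⟩ := mem_sdiff.1 hmMS
  obtain ⟨p, hp⟩ := hM.exists_private hmM
  obtain ⟨q, hq⟩ := hlost p hp
  exact (hS.dist_of_private_dominated hT hmM hmS hp hq).2.2.2

lemma mem_layer_succ {c : V} : c ∈ layer G M v (n + 1) ↔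
    c ∈ M ∧
      ∃ m ∈ deprived G M (layer G M v n), G.Adj m c ∧ G.dist v m + 1 = G.dist v c := by
  simp [layer]

lemma isLayer_layer (hT : G.IsTree) (hM : MinimalDomSet G M) (hv : v ∈ M) :
    ∀ n, IsLayer G M v n (layer G M v n)
  | 0 => by
    intro r hr
    obtain rfl := mem_singleton.1 hr
    exact ⟨hv, by simp, Or.inl rfl⟩
  | n + 1 => by
    intro c hc
    obtain ⟨hcM, m, hm, hmc, hmd⟩ := mem_layer_succ.1 hc
    have := (isLayer_layer hT hM hv n).dist_of_mem_deprived hT hM hm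
    exact ⟨hcM, by omega, Or.inr ⟨m, (mem_sdiff.1 (mem_filter.1 hm).1).1, hmc, hmd⟩⟩

lemma mem_removed : x ∈ removed G M v ↔ ∃ n < Fintype.card V, x ∈ layer G M v n := by
  simp [removed]

lemma mem_added :
    x ∈ added G M v ↔ ∃ n < Fintype.card V, x ∈ externalPrivates G M (layer G M v n) := by
  simp [added]

lemma removed_subset (hT : G.IsTree) (hM : MinimalDomSet G M) (hv : v ∈ M) :
    removed G M v ⊆ M := fun x hx => by
  obtain ⟨n, -, hx⟩ := mem_removed.1 hx
  exact (isLayer_layer hT hM hv n x hx).1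

lemma dist_mod_four_of_mem_removed (hT : G.IsTree) (hM : MinimalDomSet G M) (hv : v ∈ M)
    (hx : x ∈ removed G M v) : G.dist v x % 4 = 0 := by
  obtain ⟨n, -, hx⟩ := mem_removed.1 hx
  have := (isLayer_layer hT hM hv n x hx).2.1
  omega

lemma notMem_of_mem_added (hx : x ∈ added G M v) : x ∉ M := by
  obtain ⟨n, -, hx⟩ := mem_added.1 hx
  exact (mem_N1Set.1 (mem_filter.1 hx).1).1

lemma dist_mod_four_of_mem_added (hT : G.IsTree) (hM : MinimalDomSet G M) (hv : v ∈ M)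
    (hx : x ∈ added G M v) : G.dist v x % 4 = 1 := by
  obtain ⟨n, -, hx⟩ := mem_added.1 hx
  have := ((isLayer_layer hT hM hv n).exists_of_mem_externalPrivates hT hx).1
  omega

lemma mem_externalPrivates_layer_zero (hu : u ∈ closedNbhd G v ∩ N1Set G M) :
    u ∈ externalPrivates G M (layer G M v 0) :=
  mem_filter.2 ⟨(mem_inter.1 hu).2, v, mem_singleton_self v, (mem_inter.1 hu).1⟩

lemma eq_of_forall_mem_removed (hT : G.IsTree) (hM : MinimalDomSet G M) (hv : v ∈ M)
    (hw : w ∈ M) (h : ∀ m ∈ closedNbhd G w ∩ M, m ∈ removed G M v) : w = v := by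
  have hwR := h w (mem_inter.2 ⟨self_mem_closedNbhd w, hw⟩)
  obtain ⟨n, -, hwL⟩ := mem_removed.1 hwR
  obtain ⟨-, -, hroot | ⟨m, hmM, hmw, hmd⟩⟩ := isLayer_layer hT hM hv n w hwL
  · exact hroot
  · have := dist_mod_four_of_mem_removed hT hM hv hwR
    have := dist_mod_four_of_mem_removed hT hM hv
      (h m (mem_inter.2 ⟨mem_closedNbhd_of_adj hmw.symm, hmM⟩))
    omega

lemma mem_added_of_forall_mem_removed (hT : G.IsTree) (hM : MinimalDomSet G M) (hv : v ∈ M)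
    (hw : w ∉ M) (h : ∀ m ∈ closedNbhd G w ∩ M, m ∈ removed G M v) :
    w ∈ added G M v := by
  have adj : ∀ {m}, m ∈ closedNbhd G w ∩ M → G.Adj w m := fun hm =>
    adj_of_mem_closedNbhd (mem_inter.1 hm).1 (ne_of_mem_of_not_mem (mem_inter.1 hm).2 hw)
  have parent : ∀ m ∈ closedNbhd G w ∩ M, G.dist v m + 1 = G.dist v w := fun m hm => by
    obtain ⟨j, -, hmL⟩ := mem_removed.1 (h m hm)
    exact ((isLayer_layer hT hM hv j).dist_eq_add_one_of_adj hT hmL hw (adj hm).symm).symm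
  obtain ⟨m, hmM, hmw⟩ := hM.1.exists_mem_closedNbhd w
  have hm : m ∈ closedNbhd G w ∩ M := mem_inter.2 ⟨hmw, hmM⟩
  have hdom : closedNbhd G w ∩ M = {m} := eq_singleton_iff_unique_mem.2 ⟨hm, fun m' hm' =>
    hT.eq_of_adj_of_dist_add_one_eq (adj hm') (adj hm) (parent m' hm') (parent m hm)⟩
  obtain ⟨n, hn, hmL⟩ := mem_removed.1 (h m hm)
  exact mem_added.2 ⟨n, hn, mem_filter.2 ⟨mem_N1Set_of_private hdom (adj hm).ne,
    m, hmL, mem_closedNbhd_comm.1 hmw⟩⟩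

lemma isDomSet_result (hT : G.IsTree) (hM : MinimalDomSet G M) (hv : v ∈ M)
    (hu : u ∈ closedNbhd G v ∩ N1Set G M) : IsDomSet G (result G M v) := by
  intro w
  by_cases hkept : ∃ m ∈ M \ removed G M v, m ∈ closedNbhd G w
  · obtain ⟨m, hm, hmw⟩ := hkept
    rcases mem_closedNbhd.1 hmw with rfl | hadj
    · exact Or.inl (mem_union_left _ hm)
    · exact Or.inr ⟨m, mem_union_left _ hm, hadj.symm⟩
  have hR : ∀ m ∈ closedNbhd G w ∩ M, m ∈ removed G M v := fun m hm => by
    by_contra h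
    exact hkept ⟨m, mem_sdiff.2 ⟨(mem_inter.1 hm).2, h⟩, (mem_inter.1 hm).1⟩
  by_cases hw : w ∈ M
  · obtain rfl := eq_of_forall_mem_removed hT hM hv hw hR
    have huA : u ∈ added G M w :=
      mem_added.2 ⟨0, Fintype.card_pos_iff.2 ⟨w⟩, mem_externalPrivates_layer_zero hu⟩
    have hwu : G.Adj w u := adj_of_mem_closedNbhd (mem_inter.1 hu).1
      (ne_of_mem_of_not_mem hw (notMem_of_mem_added huA)).symm
    exact Or.inr ⟨u, mem_union_right _ huA, hwu.symm⟩
  · exact Or.inl (mem_union_right _ (mem_added_of_forall_mem_removed hT hM hv hw hR))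

lemma closedNbhd_inter_result_eq_singleton_of_mem_added (hT : G.IsTree)
    (hM : MinimalDomSet G M) (hv : v ∈ M) (hx : x ∈ added G M v) :
    closedNbhd G x ∩ result G M v = {x} := by
  obtain ⟨n, hn, hxA⟩ := mem_added.1 hx
  obtain ⟨-, r, hrL, -, hxr⟩ :=
    (isLayer_layer hT hM hv n).exists_of_mem_externalPrivates hT hxA
  refine closedNbhd_inter_eq_singleton_self (mem_union_right _ hx) fun y hy hxy => ?_
  rcases mem_union.1 hy with hyM | hyA
  · obtain ⟨hyM, hyR⟩ := mem_sdiff.1 hyM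
    obtain rfl := eq_of_closedNbhd_inter_eq_singleton hxr (mem_closedNbhd_of_adj hxy) hyM
    exact hyR (mem_removed.2 ⟨n, hn, hrL⟩)
  · have := dist_mod_four_of_mem_added hT hM hv hx
    have := dist_mod_four_of_mem_added hT hM hv hyA
    rcases hT.dist_eq_dist_add_one_of_adj v hxy with h | h <;> omega

lemma closedNbhd_inter_result_eq_singleton_of_mem_deprived (hT : G.IsTree) (hM : MinimalDomSet G M)
    (hv : v ∈ M) (hx : x ∈ deprived G M (layer G M v n)) (hxR : x ∉ removed G M v) :
    closedNbhd G x ∩ result G M v = {x} := by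
  obtain ⟨hxML, hlost⟩ := mem_filter.1 hx
  obtain ⟨hxM, hxL⟩ := mem_sdiff.1 hxML
  obtain ⟨p, hp⟩ := hM.exists_private hxM
  obtain ⟨q, hq⟩ := hlost p hp
  obtain ⟨hpM, hxp, hpd, hxd⟩ :=
    (isLayer_layer hT hM hv n).dist_of_private_dominated hT hxM hxL hp hq
  refine closedNbhd_inter_eq_singleton_self (mem_union_left _ (mem_sdiff.2 ⟨hxM, hxR⟩))
    fun y hy hxy => ?_
  rcases mem_union.1 hy with hyM | hyA
  · obtain ⟨hyM, hyR⟩ := mem_sdiff.1 hyM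
    rcases hT.dist_eq_dist_add_one_of_adj v hxy with h | h
    · exact hpM (hT.eq_of_adj_of_dist_add_one_eq hxy hxp h.symm (by omega) ▸ hyM)
    · have := hT.connected.dist_lt_card v y
      exact hyR (mem_removed.2
        ⟨n + 1, by omega, mem_layer_succ.2 ⟨hyM, x, hx, hxy, h.symm⟩⟩)
  · have := dist_mod_four_of_mem_added hT hM hv hyA
    rcases hT.dist_eq_dist_add_one_of_adj v hxy with h | h <;> omega

lemma exists_mem_deprived (hT : G.IsTree) (hM : MinimalDomSet G M) (hv : v ∈ M) (hxM : x ∈ M)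
    (hxR : x ∉ removed G M v)
    (h : ∀ p, closedNbhd G p ∩ M = {x} → (closedNbhd G p ∩ added G M v).Nonempty) :
    ∃ n, x ∈ deprived G M (layer G M v n) := by
  have hlost : ∀ p, closedNbhd G p ∩ M = {x} → ∃ n,
      (closedNbhd G p ∩ externalPrivates G M (layer G M v n)).Nonempty ∧
        G.dist v x = 4 * n + 3 := by
    intro p hp
    obtain ⟨q, hq⟩ := h p hp
    obtain ⟨n, hn, hqA⟩ := mem_added.1 (mem_inter.1 hq).2
    have hxL : x ∉ layer G M v n := fun hxL => hxR (mem_removed.2 ⟨n, hn, hxL⟩)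
    have hq' := mem_inter.2 ⟨(mem_inter.1 hq).1, hqA⟩
    exact ⟨n, ⟨q, hq'⟩,
      ((isLayer_layer hT hM hv n).dist_of_private_dominated hT hxM hxL hp hq').2.2.2⟩
  obtain ⟨p₀, hp₀⟩ := hM.exists_private hxM
  obtain ⟨n, -, hxd⟩ := hlost p₀ hp₀
  have := hT.connected.dist_lt_card v x
  have hxL : x ∉ layer G M v n := fun hxL => hxR (mem_removed.2 ⟨n, by omega, hxL⟩)
  refine ⟨n, mem_filter.2 ⟨mem_sdiff.2 ⟨hxM, hxL⟩, fun p hp => ?_⟩⟩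
  obtain ⟨j, hj, hxd'⟩ := hlost p hp
  obtain rfl : j = n := by omega
  exact hj

lemma exists_private_result (hT : G.IsTree) (hM : MinimalDomSet G M) (hv : v ∈ M)
    (hx : x ∈ result G M v) : ∃ p, closedNbhd G p ∩ result G M v = {x} := by
  rcases mem_union.1 hx with hxMR | hxA
  · obtain ⟨hxM, hxR⟩ := mem_sdiff.1 hxMR
    by_cases h : ∀ p, closedNbhd G p ∩ M = {x} → (closedNbhd G p ∩ added G M v).Nonempty
    · obtain ⟨n, hn⟩ := exists_mem_deprived hT hM hv hxM hxR h
      exact ⟨x, closedNbhd_inter_result_eq_singleton_of_mem_deprived hT hM hv hn hxR⟩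
    push Not at h
    obtain ⟨p, hp, hpA⟩ := h
    refine ⟨p, eq_singleton_iff_unique_mem.2
      ⟨mem_inter.2 ⟨(mem_of_closedNbhd_inter_eq_singleton hp).1, hx⟩, fun y hy => ?_⟩⟩
    obtain ⟨hyp, hy⟩ := mem_inter.1 hy
    rcases mem_union.1 hy with hyM | hyA
    · exact eq_of_closedNbhd_inter_eq_singleton hp hyp (mem_sdiff.1 hyM).1
    · exact absurd (hpA ▸ mem_inter.2 ⟨hyp, hyA⟩) (notMem_empty y)
  · exact ⟨x, closedNbhd_inter_result_eq_singleton_of_mem_added hT hM hv hxA⟩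

lemma exists_private_ne_of_mem_layer (hM : MinimalDomSet G M)
    (hS : IsLayer G M v n S) (hu : u ∈ closedNbhd G v ∩ N1Set G M) (hr : r ∈ S) :
    ∃ p ≠ r, closedNbhd G p ∩ M = {r} := by
  obtain ⟨hrM, -, rfl | ⟨m, hmM, hmr, -⟩⟩ := hS r hr
  · obtain ⟨hur, huN⟩ := mem_inter.1 hu
    exact ⟨u, (ne_of_mem_of_not_mem hrM (mem_N1Set.1 huN).1).symm,
      closedNbhd_inter_eq_singleton_of_mem_N1Set huN (mem_closedNbhd_comm.1 hur) hrM⟩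
  · obtain ⟨p, hp⟩ := hM.exists_private hrM
    refine ⟨p, ?_, hp⟩
    rintro rfl
    exact hmr.ne (eq_of_closedNbhd_inter_eq_singleton hp (mem_closedNbhd_of_adj hmr.symm) hmM)

lemma card_le_card_externalPrivates (hM : MinimalDomSet G M) (hS : IsLayer G M v n S)
    (hu : u ∈ closedNbhd G v ∩ N1Set G M) : S.card ≤ (externalPrivates G M S).card := by
  refine card_le_card_of_forall_subsingleton (fun r p => closedNbhd G p ∩ M = {r})
    (fun r hr => ?_) fun p _ r ⟨_, hr⟩ r' ⟨_, hr'⟩ =>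
      singleton_injective (hr.symm.trans hr')
  obtain ⟨p, hpr, hp⟩ := exists_private_ne_of_mem_layer hM hS hu hr
  exact ⟨p, mem_filter.2 ⟨mem_N1Set_of_private hp hpr, r, hr,
    mem_closedNbhd_comm.1 (mem_of_closedNbhd_inter_eq_singleton hp).1⟩, hp⟩

lemma card_layer_zero_lt (hu₁ : u₁ ∈ closedNbhd G v ∩ N1Set G M)
    (hu₂ : u₂ ∈ closedNbhd G v ∩ N1Set G M) (hne : u₁ ≠ u₂) :
    (layer G M v 0).card < (externalPrivates G M (layer G M v 0)).card :=
  calc (layer G M v 0).card = 1 := card_singleton v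
    _ < ({u₁, u₂} : Finset V).card := by rw [card_pair hne]; norm_num
    _ ≤ _ := card_le_card (insert_subset (mem_externalPrivates_layer_zero hu₁)
      (singleton_subset_iff.2 (mem_externalPrivates_layer_zero hu₂)))

lemma card_added (hT : G.IsTree) (hM : MinimalDomSet G M) (hv : v ∈ M) :
    (added G M v).card =
      ∑ n ∈ range (Fintype.card V), (externalPrivates G M (layer G M v n)).card := by
  refine card_biUnion fun n _ j _ hnj => disjoint_left.2 fun q hqn hqj => hnj ?_
  have := ((isLayer_layer hT hM hv n).exists_of_mem_externalPrivates hT hqn).1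
  have := ((isLayer_layer hT hM hv j).exists_of_mem_externalPrivates hT hqj).1
  omega

lemma card_lt_card_result (hT : G.IsTree) (hM : MinimalDomSet G M) (hv : v ∈ M)
    (hu₁ : u₁ ∈ closedNbhd G v ∩ N1Set G M) (hu₂ : u₂ ∈ closedNbhd G v ∩ N1Set G M)
    (hne : u₁ ≠ u₂) : M.card < (result G M v).card := by
  have hpos : 0 < Fintype.card V := Fintype.card_pos_iff.2 ⟨v⟩
  have hlt : ∑ n ∈ range (Fintype.card V), (layer G M v n).card <
      ∑ n ∈ range (Fintype.card V), (externalPrivates G M (layer G M v n)).card :=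
    sum_lt_sum (fun n _ => card_le_card_externalPrivates hM (isLayer_layer hT hM hv n) hu₁)
      ⟨0, mem_range.2 hpos, card_layer_zero_lt hu₁ hu₂ hne⟩
  have hR : (removed G M v).card ≤ ∑ n ∈ range (Fintype.card V), (layer G M v n).card :=
    card_biUnion_le
  have hdisj : Disjoint (M \ removed G M v) (added G M v) :=
    disjoint_right.2 fun q hq hq' => notMem_of_mem_added hq (mem_sdiff.1 hq').1
  calc M.card = (M \ removed G M v).card + (removed G M v).card :=
        (card_sdiff_add_card_eq_card (removed_subset hT hM hv)).symm
    _ < (M \ removed G M v).card + (added G M v).card := by rw [card_added hT hM hv]; omega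
    _ = (result G M v).card := (card_union_of_disjoint hdisj).symm

end Exchange

lemma MinimalDomSet.eq_of_mem_closedNbhd_inter_N1Set (hT : G.IsTree) (hM : MinimalDomSet G M)
    (hmax : M.card = bigGamma G) (hr : r ∈ M) {u' : V} (hu : u ∈ closedNbhd G r ∩ N1Set G M)
    (hu' : u' ∈ closedNbhd G r ∩ N1Set G M) : u = u' := by
  by_contra hne
  have hmin := minimalDomSet_of_forall_private (Exchange.isDomSet_result hT hM hr hu)
    fun x hx => Exchange.exists_private_result hT hM hr hx
  have := Exchange.card_lt_card_result hT hM hr hu hu' hne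
  have := hmin.card_le_bigGamma
  omega

theorem a1_card_eq_N1_card_of_maximum_minimal (G : SimpleGraph V) (hT : G.IsTree)
    (M : Finset V) (hM : MinimalDomSet G M) (hcard : M.card = bigGamma G) :
    (a1Set G M).card = (N1Set G M).card :=
  card_a1Set_eq_card_N1Set fun _ hr _ hu _ hu' =>
    hM.eq_of_mem_closedNbhd_inter_N1Set hT hcard hr hu hu'
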